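/- A unidirectional quantum Turing machine M = (Σ, Q, δ) is well-formed if and only if its transition function δ satisfies: (Normalisation) ‖δ(p,σ)‖ = 1 for every (p,σ) ∈ Q × Σ; and (Orthogonality) ⟨δ_r(p₁,σ₁), δ_r(p₂,σ₂)⟩ = 0 for every pair (p₁,σ₁) ≠ (p₂,σ₂) in Q × Σ, where δ_r is the reduced transition function. Furthermore, any partial unidirectional quantum transition function satisfying these conditions can always be completed to the transition function of a well-formed unidirectional QTM. -/

import Mathlib

open scoped Classical

noncomputable section

/-- Head movement directions: Left, Right, or None. -/
inductive Dir3 : Type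
  | L
  | R
  | N
deriving DecidableEq

instance instFintypeDir3 : Fintype Dir3 :=
  ⟨{Dir3.L, Dir3.R, Dir3.N}, fun x => by cases x <;> simp⟩

/-- Displacement of the head. -/
def Dir3.move : Dir3 → ℤ
  | .L => -1
  | .R => 1
  | .N => 0

/-- A quantum Turing machine over finite tape alphabet `Γ` (blank `blank`) and finite
state set `Q` (initial `q0`, final `qf`), with quantum transition function
`δ : Q × Γ → ℂ^{Γ × Q × {L,R,N}}`; `δ p σ τ q d` is the amplitude for, reading `σ` in
state `p`, writing `τ`, entering `q` and moving in direction `d`. -/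
structure QTM (Γ Q : Type) where
  blank : Γ
  q0 : Q
  qf : Q
  δ : Q → Γ → Γ → Q → Dir3 → ℂ

/-- A configuration of a QTM: internal state, head position and tape contents. -/
structure QCfg (Γ Q : Type) where
  state : Q
  head : ℤ
  tape : ℤ → Γ

variable {Γ Q : Type}

/-- The superposition of configurations reached from a single configuration `c`
in one step. -/
def QTM.image [Fintype Γ] [Fintype Q] (M : QTM Γ Q) (c : QCfg Γ Q) :
    QCfg Γ Q →₀ ℂ :=
  ∑ τ : Γ, ∑ q : Q, ∑ d : Dir3,
    Finsupp.single
      ⟨q, c.head + d.move, Function.update c.tape c.head τ⟩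
      (M.δ c.state (c.tape c.head) τ q d)

/-- The time-evolution operator `U_M` of the QTM `M`, acting on the inner-product
space of finite complex linear combinations of configurations. -/
def QTM.evolve [Fintype Γ] [Fintype Q] (M : QTM Γ Q) :
    (QCfg Γ Q →₀ ℂ) →ₗ[ℂ] (QCfg Γ Q →₀ ℂ) :=
  Finsupp.lsum ℂ fun c => LinearMap.toSpanSingleton ℂ _ (M.image c)

/-- The squared Euclidean norm on finite linear combinations of configurations. -/
def normSqF {α : Type*} (v : α →₀ ℂ) : ℝ :=
  v.sum fun _ a => Complex.normSq a

/-- `M` is well-formed if its time evolution operator preserves the Euclidean norm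
(is an isometry). -/
def QTM.WellFormed [Fintype Γ] [Fintype Q] (M : QTM Γ Q) : Prop :=
  ∀ v : QCfg Γ Q →₀ ℂ, normSqF (M.evolve v) = normSqF v

/-- `M` is in normal form: `δ(q_f, σ) = |σ⟩|q₀⟩|N⟩` for every `σ`. -/
def QTM.NormalForm (M : QTM Γ Q) : Prop :=
  ∀ (σ τ : Γ) (q : Q) (d : Dir3),
    M.δ M.qf σ τ q d = if τ = σ ∧ q = M.q0 ∧ d = Dir3.N then 1 else 0

/-- `M` is unidirectional: each state can be entered while moving in only one
direction. -/
def QTM.Unidirectional (M : QTM Γ Q) : Prop :=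
  ∀ (p₁ σ₁ τ₁ p₂ σ₂ τ₂ : _) (q : Q) (d₁ d₂ : Dir3),
    M.δ p₁ σ₁ τ₁ q d₁ ≠ 0 → M.δ p₂ σ₂ τ₂ q d₂ ≠ 0 → d₁ = d₂

/-- The superposition `ψ` halts (for the first time) at time `n`: at time `n` it is
supported on configurations in the final state, and at no earlier time. -/
def QTM.HaltsAt [Fintype Γ] [Fintype Q] (M : QTM Γ Q) (ψ : QCfg Γ Q →₀ ℂ)
    (n : ℕ) : Prop :=
  (∀ c ∈ (M.evolve^[n] ψ).support, c.state = M.qf) ∧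
  ∀ t < n, ∃ c ∈ (M.evolve^[t] ψ).support, c.state ≠ M.qf

/-- `M` behaves properly on the set `X` of initial superpositions: started from any
`ψ ∈ X` it halts in a final superposition in which every configuration has the head in
the starting cell, the head never moves to the left of the starting cell, and at every
time step all configurations in the superposition have the head at the same location
(deterministic head movement). -/
def QTM.ProperOn [Fintype Γ] [Fintype Q] (M : QTM Γ Q)
    (X : Set (QCfg Γ Q →₀ ℂ)) : Prop :=
  ∀ ψ ∈ X, ∃ n : ℕ, M.HaltsAt ψ n ∧
    (∀ c ∈ (M.evolve^[n] ψ).support, c.head = 0) ∧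
    (∀ t ≤ n, ∀ c ∈ (M.evolve^[t] ψ).support, 0 ≤ c.head) ∧
    (∀ t ≤ n, ∀ c ∈ (M.evolve^[t] ψ).support, ∀ c' ∈ (M.evolve^[t] ψ).support,
      c.head = c'.head)

/-- Relabelling the internal state of every configuration in a superposition
(used to replace `q_f` by the initial state of the reverse machine, etc.). -/
def relabel {Q' : Type} (r : Q') (ψ : QCfg Γ Q →₀ ℂ) : QCfg Γ Q' →₀ ℂ :=
  Finsupp.mapDomain (fun c => ⟨r, c.head, c.tape⟩) ψ

/-- The set of tape cells visited (head positions occurring with nonzero amplitude)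
during the first `n` steps of the evolution of `ψ`. -/
def QTM.visited [Fintype Γ] [Fintype Q] (M : QTM Γ Q) (ψ : QCfg Γ Q →₀ ℂ)
    (n : ℕ) : Set ℤ :=
  {h : ℤ | ∃ t ≤ n, ∃ c ∈ (M.evolve^[t] ψ).support, c.head = h}

/-- The reduced transition function `δ_r` of a unidirectional QTM: the direction
component (determined by the entered state) is dropped. -/
def QTM.reduced (M : QTM Γ Q) (p : Q) (σ : Γ) (τ : Γ) (q : Q) : ℂ :=
  ∑ d : Dir3, M.δ p σ τ q d

/-- Normalisation: `‖δ(p,σ)‖ = 1` for every `(p, σ)`. -/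
def QTM.Normalised [Fintype Γ] [Fintype Q] (M : QTM Γ Q) : Prop :=
  ∀ (p : Q) (σ : Γ),
    ∑ τ : Γ, ∑ q : Q, ∑ d : Dir3, Complex.normSq (M.δ p σ τ q d) = 1

/-- Orthogonality: `⟨δ_r(p₁,σ₁), δ_r(p₂,σ₂)⟩ = 0` for distinct `(p₁,σ₁) ≠ (p₂,σ₂)`. -/
def QTM.Orthogonal [Fintype Γ] [Fintype Q] (M : QTM Γ Q) : Prop :=
  ∀ (p₁ : Q) (σ₁ : Γ) (p₂ : Q) (σ₂ : Γ), (p₁, σ₁) ≠ (p₂, σ₂) →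
    ∑ τ : Γ, ∑ q : Q,
      (starRingEnd ℂ) (M.reduced p₁ σ₁ τ q) * M.reduced p₂ σ₂ τ q = 0

/-! Under unidirectionality every state `q` is entered moving in a single direction `D q`, so
`U_M` sends a configuration `c` in state `p` scanning `σ` to
`∑ (τ, q), δ_r(p, σ)(τ, q) · c.next D (τ, q)`. Two configurations either have the same successor
map `c.next D` (same head position, same tape away from the head) or disjoint sets of successors,
so `⟨U c, U c'⟩` is either `⟨δ_r(p, σ), δ_r(p', σ')⟩` or `0`. By polarisation `U_M` is an
isometry iff it maps the configurations to an orthonormal family, i.e. iff the vectors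
`δ_r(p, σ) ∈ ℂ^{Γ × Q}` are orthonormal, which is normalisation plus orthogonality.
For the completion, extend `(δ_r(p, σ))_{(p, σ) ∈ P}` to an orthonormal basis of `ℂ^{Γ × Q}`
indexed by `Q × Γ` and enter every state `q` in its direction `D q`. -/

open scoped InnerProductSpace

namespace LinearMap

variable {M : Type*} [AddCommGroup M] [Module ℂ M]

theorem eq_zero_of_forall_apply_self_eq_zero (B : M →ₗ⋆[ℂ] M →ₗ[ℂ] ℂ)
    (h : ∀ v, B v v = 0) : B = 0 := by
  ext v w
  have h₁ := h (v + w)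
  have h₂ := h (v + Complex.I • w)
  simp only [map_add, map_smulₛₗ, add_apply, smul_apply, h, Complex.conj_I,
    smul_eq_mul, RingHom.id_apply, mul_zero, zero_add, add_zero] at h₁ h₂
  simp only [zero_apply]
  linear_combination (1 / 2 : ℂ) * h₁ - (Complex.I / 2) * h₂ + (B v w - B w v) / 2 * Complex.I_sq

end LinearMap

section innerF

variable {α β : Type*}

def innerF : (α →₀ ℂ) →ₗ⋆[ℂ] (α →₀ ℂ) →ₗ[ℂ] ℂ :=
  LinearMap.mk₂'ₛₗ (starRingEnd ℂ) (RingHom.id ℂ)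
    (fun v w => v.sum fun a x => starRingEnd ℂ x * w a)
    (fun _ _ _ => Finsupp.sum_add_index' (by simp) (by simp [add_mul]))
    (fun _ _ _ => by
      rw [Finsupp.sum_smul_index' (by simp)]
      simp only [smul_eq_mul, map_mul, mul_assoc, Finsupp.mul_sum])
    (fun _ _ _ => by simp only [Finsupp.coe_add, Pi.add_apply, mul_add, Finsupp.sum_add])
    (fun _ _ _ => by
      simp only [Finsupp.coe_smul, Pi.smul_apply, smul_eq_mul, RingHom.id_apply, Finsupp.mul_sum]
      exact Finsupp.sum_congr fun _ _ => by ring)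

theorem innerF_single_left (a : α) (x : ℂ) (w : α →₀ ℂ) :
    innerF (Finsupp.single a x) w = starRingEnd ℂ x * w a :=
  (LinearMap.mk₂'ₛₗ_apply ..).trans (Finsupp.sum_single_index (by simp))

theorem innerF_self (v : α →₀ ℂ) : innerF v v = normSqF v := by
  simp only [innerF, LinearMap.mk₂'ₛₗ_apply, normSqF, Finsupp.sum, Complex.ofReal_sum,
    Complex.normSq_eq_conj_mul_self]

theorem normSqF_map_eq_iff [DecidableEq α] (T : (α →₀ ℂ) →ₗ[ℂ] (β →₀ ℂ)) :
    (∀ v, normSqF (T v) = normSqF v) ↔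
      ∀ a b, innerF (T (Finsupp.single a 1)) (T (Finsupp.single b 1)) = if a = b then 1 else 0 := by
  set B := (innerF.comp T).compl₂ T - innerF
  have hB : ∀ v w, B v w = innerF (T v) (T w) - innerF v w := fun _ _ => rfl
  calc (∀ v, normSqF (T v) = normSqF v) ↔ B = 0 := by
        refine ⟨fun h => LinearMap.eq_zero_of_forall_apply_self_eq_zero B fun v => ?_,
          fun h v => ?_⟩
        · rw [hB, innerF_self, innerF_self, h, sub_self]
        · have := congrArg (fun B' => B' v v) h
          simp only [hB, innerF_self, LinearMap.zero_apply, sub_eq_zero] at this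
          exact_mod_cast this
    _ ↔ ∀ a b, B (Finsupp.single a 1) (Finsupp.single b 1) = 0 := by
        refine ⟨fun h a b => by simp [h], fun h => ?_⟩
        refine LinearMap.ext_basis Finsupp.basisSingleOne Finsupp.basisSingleOne fun a b => ?_
        simpa using h a b
    _ ↔ _ := by
        simp only [hB, sub_eq_zero, innerF_single_left, Finsupp.single_eq_pi_single,
          Pi.single_apply, map_one, one_mul]

theorem innerF_sum_single_sum_single {ι κ : Type*} (s : Finset ι) (t : Finset κ) (f : ι → α)
    (g : κ → α) (x : ι → ℂ) (y : κ → ℂ) :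
    innerF (∑ i ∈ s, Finsupp.single (f i) (x i)) (∑ j ∈ t, Finsupp.single (g j) (y j)) =
      ∑ i ∈ s, ∑ j ∈ t, if f i = g j then starRingEnd ℂ (x i) * y j else 0 := by
  simp only [map_sum, LinearMap.sum_apply]
  simp only [innerF_single_left, Finsupp.single_eq_pi_single, Pi.single_apply, mul_ite, mul_zero]
  exact Finset.sum_comm

end innerF

def reducedVec (δ : Q → Γ → Γ → Q → Dir3 → ℂ) (x : Q × Γ) : EuclideanSpace ℂ (Γ × Q) :=
  WithLp.toLp 2 fun i => ∑ d : Dir3, δ x.1 x.2 i.1 i.2 d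

def IsEntryDirection (S : Set (Q × Γ)) (δ : Q → Γ → Γ → Q → Dir3 → ℂ) (D : Q → Dir3) :
    Prop :=
  ∀ p σ, (p, σ) ∈ S → ∀ τ q d, δ p σ τ q d ≠ 0 → d = D q

section EntryDirection

variable {S : Set (Q × Γ)} {δ : Q → Γ → Γ → Q → Dir3 → ℂ} {D : Q → Dir3}

theorem exists_isEntryDirection
    (h : ∀ p₁ σ₁ τ₁ p₂ σ₂ τ₂ (q : Q) (d₁ d₂ : Dir3), (p₁, σ₁) ∈ S → (p₂, σ₂) ∈ S →
      δ p₁ σ₁ τ₁ q d₁ ≠ 0 → δ p₂ σ₂ τ₂ q d₂ ≠ 0 → d₁ = d₂) :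
    ∃ D, IsEntryDirection S δ D := by
  have : ∀ q, ∃ e : Dir3, ∀ p σ, (p, σ) ∈ S → ∀ τ d, δ p σ τ q d ≠ 0 → d = e := by
    intro q
    by_cases hq : ∃ p σ τ d, (p, σ) ∈ S ∧ δ p σ τ q d ≠ 0
    · obtain ⟨p₂, σ₂, τ₂, e, hS₂, he⟩ := hq
      exact ⟨e, fun p σ hS τ d hd => h p σ τ p₂ σ₂ τ₂ q d e hS hS₂ hd he⟩
    · exact ⟨.N, fun p σ hS τ d hd => absurd ⟨p, σ, τ, d, hS, hd⟩ hq⟩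
  choose D hD using this
  exact ⟨D, fun p σ hS τ q d => hD q p σ hS τ d⟩

theorem IsEntryDirection.eq_ite (h : IsEntryDirection S δ D) {p : Q} {σ : Γ} (hS : (p, σ) ∈ S)
    (τ : Γ) (q : Q) (d : Dir3) :
    δ p σ τ q d = if d = D q then reducedVec δ (p, σ) (τ, q) else 0 := by
  split_ifs with hd
  · subst hd
    refine (Fintype.sum_eq_single (D q) fun d hd => ?_).symm
    by_contra hne
    exact hd (h p σ hS τ q d hne)
  · by_contra hne
    exact hd (h p σ hS τ q d hne)

theorem inner_reducedVec [Fintype Γ] [Fintype Q] (x y : Q × Γ) :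
    ⟪reducedVec δ x, reducedVec δ y⟫_ℂ = ∑ τ : Γ, ∑ q : Q,
      starRingEnd ℂ (∑ d : Dir3, δ x.1 x.2 τ q d) * ∑ d : Dir3, δ y.1 y.2 τ q d := by
  simp only [PiLp.inner_apply, RCLike.inner_apply', reducedVec, Fintype.sum_prod_type]

theorem IsEntryDirection.inner_reducedVec_self [Fintype Γ] [Fintype Q]
    (h : IsEntryDirection S δ D) {p : Q} {σ : Γ} (hS : (p, σ) ∈ S) :
    ⟪reducedVec δ (p, σ), reducedVec δ (p, σ)⟫_ℂ =
      ((∑ τ : Γ, ∑ q : Q, ∑ d : Dir3, Complex.normSq (δ p σ τ q d) : ℝ) : ℂ) := by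
  rw [inner_reducedVec]
  push_cast
  refine Finset.sum_congr rfl fun τ _ => Finset.sum_congr rfl fun q _ => ?_
  simp only [h.eq_ite hS, Finset.sum_ite_eq', Finset.mem_univ, if_true, apply_ite Complex.normSq,
    map_zero, Complex.ofReal_zero, apply_ite Complex.ofReal]
  exact Complex.normSq_eq_conj_mul_self.symm

end EntryDirection

def directedTransition (D : Q → Dir3) (b : Q × Γ → EuclideanSpace ℂ (Γ × Q)) :
    Q → Γ → Γ → Q → Dir3 → ℂ :=
  fun p σ τ q d => if d = D q then b (p, σ) (τ, q) else 0

theorem isEntryDirection_directedTransition (S : Set (Q × Γ)) (D : Q → Dir3)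
    (b : Q × Γ → EuclideanSpace ℂ (Γ × Q)) : IsEntryDirection S (directedTransition D b) D :=
  fun _ _ _ _ _ _ hne => by_contra fun hd => hne (if_neg hd)

theorem reducedVec_directedTransition (D : Q → Dir3) (b : Q × Γ → EuclideanSpace ℂ (Γ × Q)) :
    reducedVec (directedTransition D b) = b := by
  funext x
  ext i
  simp [reducedVec, directedTransition]

theorem QTM.Unidirectional.of_isEntryDirection {M : QTM Γ Q} {D : Q → Dir3}
    (h : IsEntryDirection Set.univ M.δ D) : M.Unidirectional :=
  fun p₁ σ₁ τ₁ p₂ σ₂ τ₂ q _ _ h₁ h₂ =>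
    (h p₁ σ₁ (Set.mem_univ _) τ₁ q _ h₁).trans (h p₂ σ₂ (Set.mem_univ _) τ₂ q _ h₂).symm

def QCfg.stateSymbol (c : QCfg Γ Q) : Q × Γ := (c.state, c.tape c.head)

def QCfg.next (D : Q → Dir3) (c : QCfg Γ Q) (i : Γ × Q) : QCfg Γ Q :=
  ⟨i.2, c.head + (D i.2).move, Function.update c.tape c.head i.1⟩

theorem QCfg.next_injective (D : Q → Dir3) (c : QCfg Γ Q) : Function.Injective (c.next D) := by
  rintro ⟨τ, q⟩ ⟨τ', q'⟩ h
  simp only [QCfg.next, QCfg.mk.injEq] at h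
  obtain ⟨rfl, -, htape⟩ := h
  simpa using congrFun htape c.head

/-- Meeting successors force the same head position and the same tape away from the head. -/
theorem QCfg.next_eq_of_next_apply_eq {D : Q → Dir3} {c c' : QCfg Γ Q} {i j : Γ × Q}
    (h : c.next D i = c'.next D j) : c.next D = c'.next D := by
  simp only [QCfg.next, QCfg.mk.injEq] at h
  obtain ⟨hq, hhead, htape⟩ := h
  rw [hq, add_left_inj] at hhead
  funext k
  simp only [QCfg.next, hhead, QCfg.mk.injEq, true_and]
  rw [hhead] at htape
  rw [← Function.update_idem i.1 k.1 c.tape, htape, Function.update_idem]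

theorem QCfg.eq_of_next_eq {D : Q → Dir3} {c c' : QCfg Γ Q} (h : c.next D = c'.next D)
    (hs : c.stateSymbol = c'.stateSymbol) : c = c' := by
  obtain ⟨p, x, T⟩ := c
  obtain ⟨p', x', T'⟩ := c'
  simp only [QCfg.stateSymbol, Prod.mk.injEq] at hs
  obtain ⟨rfl, hσ⟩ := hs
  have := congrFun h (T x, p)
  simp only [QCfg.next, QCfg.mk.injEq, add_left_inj] at this
  obtain ⟨-, rfl, htape⟩ := this
  rw [Function.update_eq_self, hσ, Function.update_eq_self] at htape
  rw [htape]

section WellFormed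

variable [Fintype Γ] [Fintype Q]

theorem QTM.evolve_single_one (M : QTM Γ Q) (c : QCfg Γ Q) :
    M.evolve (Finsupp.single c 1) = M.image c := by
  simp [QTM.evolve]

theorem QTM.image_eq_sum_single {M : QTM Γ Q} {D : Q → Dir3}
    (h : IsEntryDirection Set.univ M.δ D) (c : QCfg Γ Q) :
    M.image c = ∑ i, Finsupp.single (c.next D i) (reducedVec M.δ c.stateSymbol i) := by
  rw [QTM.image, Fintype.sum_prod_type]
  refine Finset.sum_congr rfl fun τ _ => Finset.sum_congr rfl fun q _ => ?_
  simp only [h.eq_ite (Set.mem_univ _)]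
  rw [Fintype.sum_eq_single (D q) fun d hd => by simp [hd]]
  simp [QCfg.next, QCfg.stateSymbol]

theorem QTM.innerF_image {M : QTM Γ Q} {D : Q → Dir3} (h : IsEntryDirection Set.univ M.δ D)
    (c c' : QCfg Γ Q) :
    innerF (M.image c) (M.image c') =
      if c.next D = c'.next D then
        ⟪reducedVec M.δ c.stateSymbol, reducedVec M.δ c'.stateSymbol⟫_ℂ
      else 0 := by
  rw [QTM.image_eq_sum_single h, QTM.image_eq_sum_single h, innerF_sum_single_sum_single]
  split_ifs with hc
  · simp only [hc, (c'.next_injective D).eq_iff, Finset.sum_ite_eq, Finset.mem_univ, if_true,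
      PiLp.inner_apply, RCLike.inner_apply']
  · refine Finset.sum_eq_zero fun i _ => Finset.sum_eq_zero fun j _ => if_neg fun hij => ?_
    exact hc (QCfg.next_eq_of_next_apply_eq hij)

theorem QTM.wellFormed_iff_orthonormal {M : QTM Γ Q} {D : Q → Dir3}
    (h : IsEntryDirection Set.univ M.δ D) : M.WellFormed ↔ Orthonormal ℂ (reducedVec M.δ) := by
  simp only [QTM.WellFormed, normSqF_map_eq_iff, QTM.evolve_single_one, QTM.innerF_image h,
    orthonormal_iff_ite]
  constructor
  · intro H x y
    -- configurations that differ at most in the state and in the scanned symbol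
    let c : Q × Γ → QCfg Γ Q := fun z => ⟨z.1, 0, Function.update (fun _ => x.2) 0 z.2⟩
    have hnext : (c x).next D = (c y).next D := by
      funext i
      simp only [c, QCfg.next, Function.update_idem]
    have hc : ∀ z, (c z).stateSymbol = z := fun z => by simp [c, QCfg.stateSymbol]
    have hinj : c x = c y ↔ x = y :=
      ⟨fun e => by rw [← hc x, ← hc y, e], fun e => by rw [e]⟩
    simpa only [hnext, if_true, hc, hinj] using H (c x) (c y)
  · intro H c c'
    by_cases hnext : c.next D = c'.next D
    · rw [if_pos hnext, H]
      exact if_congr ⟨QCfg.eq_of_next_eq hnext, congrArg _⟩ rfl rfl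
    · rw [if_neg hnext, if_neg fun e => hnext (by rw [e])]

theorem QTM.orthonormal_reducedVec_iff {M : QTM Γ Q} {D : Q → Dir3}
    (h : IsEntryDirection Set.univ M.δ D) :
    Orthonormal ℂ (reducedVec M.δ) ↔ M.Normalised ∧ M.Orthogonal := by
  rw [orthonormal_iff_ite]
  refine ⟨fun H => ⟨fun p σ => ?_, fun p₁ σ₁ p₂ σ₂ hne => ?_⟩, fun ⟨hN, hO⟩ x y => ?_⟩
  · have := H (p, σ) (p, σ)
    rw [h.inner_reducedVec_self (Set.mem_univ _), if_pos rfl] at this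
    exact_mod_cast this
  · simpa only [inner_reducedVec, if_neg hne, QTM.reduced] using H (p₁, σ₁) (p₂, σ₂)
  · split_ifs with hxy
    · rw [hxy, h.inner_reducedVec_self (Set.mem_univ _), hN, Complex.ofReal_one]
    · exact (inner_reducedVec x y).trans (hO x.1 x.2 y.1 y.2 hxy)

theorem orthonormal_domRestrict_reducedVec {P : Set (Q × Γ)} {δ : Q → Γ → Γ → Q → Dir3 → ℂ}
    {D : Q → Dir3} (h : IsEntryDirection P δ D)
    (hN : ∀ p σ, (p, σ) ∈ P →
      ∑ τ : Γ, ∑ q : Q, ∑ d : Dir3, Complex.normSq (δ p σ τ q d) = 1)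
    (hO : ∀ p₁ σ₁ p₂ σ₂, (p₁, σ₁) ∈ P → (p₂, σ₂) ∈ P → (p₁, σ₁) ≠ (p₂, σ₂) →
      ∑ τ : Γ, ∑ q : Q,
        starRingEnd ℂ (∑ d : Dir3, δ p₁ σ₁ τ q d) * ∑ d : Dir3, δ p₂ σ₂ τ q d = 0) :
    Orthonormal ℂ (P.domRestrict (reducedVec δ)) := by
  rw [orthonormal_iff_ite]
  rintro ⟨⟨p, σ⟩, hx⟩ ⟨y, hy⟩
  simp only [Set.domRestrict_apply, Subtype.mk.injEq]
  split_ifs with hxy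
  · subst hxy
    rw [h.inner_reducedVec_self hx, hN _ _ hx, Complex.ofReal_one]
  · exact (inner_reducedVec _ y).trans (hO _ _ _ _ hx hy hxy)

end WellFormed

theorem quantum_local_wellformedness_general {Γ Q : Type} [Fintype Γ] [Fintype Q] :
    (∀ M : QTM Γ Q, M.Unidirectional →
      (M.WellFormed ↔ (M.Normalised ∧ M.Orthogonal))) ∧
    (∀ (P : Set (Q × Γ)) (δ₀ : Q → Γ → Γ → Q → Dir3 → ℂ),
      -- partial unidirectionality
      (∀ p₁ σ₁ τ₁ p₂ σ₂ τ₂ (q : Q) (d₁ d₂ : Dir3),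
        (p₁, σ₁) ∈ P → (p₂, σ₂) ∈ P →
        δ₀ p₁ σ₁ τ₁ q d₁ ≠ 0 → δ₀ p₂ σ₂ τ₂ q d₂ ≠ 0 → d₁ = d₂) →
      -- normalisation on the defined part
      (∀ p σ, (p, σ) ∈ P →
        ∑ τ : Γ, ∑ q : Q, ∑ d : Dir3, Complex.normSq (δ₀ p σ τ q d) = 1) →
      -- orthogonality on the defined part
      (∀ p₁ σ₁ p₂ σ₂, (p₁, σ₁) ∈ P → (p₂, σ₂) ∈ P → (p₁, σ₁) ≠ (p₂, σ₂) →
        ∑ τ : Γ, ∑ q : Q,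
          (starRingEnd ℂ) (∑ d : Dir3, δ₀ p₁ σ₁ τ q d)
            * (∑ d : Dir3, δ₀ p₂ σ₂ τ q d) = 0) →
      -- completion to a total well-formed unidirectional transition function
      ∃ δ : Q → Γ → Γ → Q → Dir3 → ℂ,
        (∀ p σ, (p, σ) ∈ P → ∀ τ q d, δ p σ τ q d = δ₀ p σ τ q d) ∧
        ∀ (b : Γ) (x y : Q),
          (QTM.mk b x y δ).Unidirectional ∧ (QTM.mk b x y δ).WellFormed) := by
  refine ⟨fun M hU => ?_, fun P δ₀ hU₀ hN₀ hO₀ => ?_⟩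
  · obtain ⟨D, hD⟩ := exists_isEntryDirection (S := Set.univ)
      fun p₁ σ₁ τ₁ p₂ σ₂ τ₂ q d₁ d₂ _ _ => hU p₁ σ₁ τ₁ p₂ σ₂ τ₂ q d₁ d₂
    rw [QTM.wellFormed_iff_orthonormal hD, QTM.orthonormal_reducedVec_iff hD]
  · obtain ⟨D, hD⟩ := exists_isEntryDirection hU₀
    obtain ⟨b, hb⟩ :=
      (orthonormal_domRestrict_reducedVec hD hN₀ hO₀).exists_orthonormalBasis_extension_of_card_eq
        (by rw [finrank_euclideanSpace, Fintype.card_prod, Fintype.card_prod, mul_comm])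
    have hDb := isEntryDirection_directedTransition Set.univ D b
    refine ⟨directedTransition D b, fun p σ hp τ q d => ?_,
      fun _ _ _ => ⟨.of_isEntryDirection hDb, ?_⟩⟩
    · rw [hD.eq_ite hp, directedTransition, hb _ hp]
    · rw [QTM.wellFormed_iff_orthonormal hDb, reducedVec_directedTransition]
      exact b.orthonormal

/-- **Quantum local well-formedness** (Theorem `QTM_transitions`).  A unidirectional
QTM is well-formed iff its transition function satisfies the normalisation and
orthogonality conditions; and any partial unidirectional quantum transition function
satisfying these conditions (on its domain of definition `P`) can be completed to the
transition function of a well-formed unidirectional QTM. -/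
theorem quantum_local_wellformedness {Γ Q : Type} [Fintype Γ] [Fintype Q]
    [DecidableEq Γ] [DecidableEq Q] :
    (∀ M : QTM Γ Q, M.Unidirectional →
      (M.WellFormed ↔ (M.Normalised ∧ M.Orthogonal))) ∧
    (∀ (P : Set (Q × Γ)) (δ₀ : Q → Γ → Γ → Q → Dir3 → ℂ),
      -- partial unidirectionality
      (∀ p₁ σ₁ τ₁ p₂ σ₂ τ₂ (q : Q) (d₁ d₂ : Dir3),
        (p₁, σ₁) ∈ P → (p₂, σ₂) ∈ P →
        δ₀ p₁ σ₁ τ₁ q d₁ ≠ 0 → δ₀ p₂ σ₂ τ₂ q d₂ ≠ 0 → d₁ = d₂) →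
      -- normalisation on the defined part
      (∀ p σ, (p, σ) ∈ P →
        ∑ τ : Γ, ∑ q : Q, ∑ d : Dir3, Complex.normSq (δ₀ p σ τ q d) = 1) →
      -- orthogonality on the defined part
      (∀ p₁ σ₁ p₂ σ₂, (p₁, σ₁) ∈ P → (p₂, σ₂) ∈ P → (p₁, σ₁) ≠ (p₂, σ₂) →
        ∑ τ : Γ, ∑ q : Q,
          (starRingEnd ℂ) (∑ d : Dir3, δ₀ p₁ σ₁ τ q d)
            * (∑ d : Dir3, δ₀ p₂ σ₂ τ q d) = 0) →
      -- completion to a total well-formed unidirectional transition function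
      ∃ δ : Q → Γ → Γ → Q → Dir3 → ℂ,
        (∀ p σ, (p, σ) ∈ P → ∀ τ q d, δ p σ τ q d = δ₀ p σ τ q d) ∧
        ∀ (b : Γ) (x y : Q),
          (QTM.mk b x y δ).Unidirectional ∧ (QTM.mk b x y δ).WellFormed) :=
  quantum_local_wellformedness_general
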